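/- arXiv:2603.25348 — 8 statements merged into one kernel-verified Lean document; each statement's English description precedes it below -/
import Mathlib

section
/- Let B be a bivariate copula, let ε > 0, and define C_ε(u,v) := u·v + (ε/2)(B(u,v) − B(v,u)) for (u,v) ∈ [0,1]². Assume that C_ε satisfies the 2-increasing property. Then C_ε is a bivariate copula, and for every (u,v) ∈ [0,1]² one has the pointwise identity C_ε(u,v) − C_ε(v,u) = 2(C_ε(u,v) − u·v). Consequently, for every real p ∈ [1, ∞), ∫_{[0,1]²} |C_ε(u,v) − C_ε(v,u)|^p du dv = 2^p · ∫_{[0,1]²} |C_ε(u,v) − u·v|^p du dv, so the bound μ_p(C) ≤ 2·d_p(C,Π) is attained with equality by C_ε. -/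
open MeasureTheory Set Filter

noncomputable section

/-- A bivariate copula: boundary conditions on `[0,1]` and the 2-increasing property. -/
def IsCopula (C : ℝ → ℝ → ℝ) : Prop :=
  (∀ u ∈ Set.Icc (0:ℝ) 1, C u 0 = 0) ∧
  (∀ v ∈ Set.Icc (0:ℝ) 1, C 0 v = 0) ∧
  (∀ u ∈ Set.Icc (0:ℝ) 1, C u 1 = u) ∧
  (∀ v ∈ Set.Icc (0:ℝ) 1, C 1 v = v) ∧
  (∀ u₁ u₂ v₁ v₂ : ℝ, 0 ≤ u₁ → u₁ ≤ u₂ → u₂ ≤ 1 → 0 ≤ v₁ → v₁ ≤ v₂ → v₂ ≤ 1 →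
    0 ≤ C u₂ v₂ - C u₁ v₂ - C u₂ v₁ + C u₁ v₁)

/-- The unit square `[0,1]²` in `ℝ × ℝ`. -/
def unitSq : Set (ℝ × ℝ) := Set.Icc (0:ℝ) 1 ×ˢ Set.Icc (0:ℝ) 1

theorem stmt2 (B : ℝ → ℝ → ℝ) (hB : IsCopula B) (ε : ℝ) (hε : 0 < ε)
    (Cε : ℝ → ℝ → ℝ)
    (hdef : ∀ u v : ℝ, Cε u v = u * v + (ε / 2) * (B u v - B v u))
    (h2inc : ∀ u₁ u₂ v₁ v₂ : ℝ, 0 ≤ u₁ → u₁ ≤ u₂ → u₂ ≤ 1 → 0 ≤ v₁ → v₁ ≤ v₂ → v₂ ≤ 1 →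
      0 ≤ Cε u₂ v₂ - Cε u₁ v₂ - Cε u₂ v₁ + Cε u₁ v₁) :
    IsCopula Cε ∧
    (∀ u ∈ Set.Icc (0:ℝ) 1, ∀ v ∈ Set.Icc (0:ℝ) 1,
      Cε u v - Cε v u = 2 * (Cε u v - u * v)) ∧
    (∀ p : ℝ, 1 ≤ p →
      (∫ x in unitSq, |Cε x.1 x.2 - Cε x.2 x.1| ^ p) =
        (2:ℝ) ^ p * ∫ x in unitSq, |Cε x.1 x.2 - x.1 * x.2| ^ p) := by

  obtain ⟨hB1, hB2, hB3, hB4, hB5⟩ := hB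
  have key : ∀ u v : ℝ, Cε u v - Cε v u = 2 * (Cε u v - u * v) := by
    intro u v
    rw [hdef u v, hdef v u]; ring
  refine ⟨⟨?_, ?_, ?_, ?_, h2inc⟩, fun u _ v _ => key u v, ?_⟩
  · intro u hu
    rw [hdef, hB1 u hu, hB2 u hu]; ring
  · intro v hv
    rw [hdef, hB1 v hv, hB2 v hv]; ring
  · intro u hu
    rw [hdef, hB3 u hu, hB4 u hu]; ring
  · intro v hv
    rw [hdef, hB3 v hv, hB4 v hv]; ring
  · intro p hp
    rw [← MeasureTheory.integral_const_mul]
    apply MeasureTheory.integral_congr_ae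
    filter_upwards with x
    have h2 : (0:ℝ) ≤ 2 := by norm_num
    rw [key x.1 x.2, abs_mul, abs_two,
      Real.mul_rpow h2 (abs_nonneg _)]
end
end

section
/- For every θ ∈ [0, 1/3], the function M_θ(u,v) := min{u, v, max(u − 1 + θ, 0) + max(v − θ, 0)} defined on [0,1]² is a bivariate copula. -/
open MeasureTheory Set Filter

noncomputable section

/-- The maximally non-exchangeable family `M_θ`. -/
def Mtheta (θ : ℝ) (u v : ℝ) : ℝ :=
  min u (min v (max (u - 1 + θ) 0 + max (v - θ) 0))

/-- The 2-increasing property for `M_θ`, valid for any `θ`. -/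
theorem aux_incr (θ u₁ u₂ v₁ v₂ : ℝ) (h2 : u₁ ≤ u₂) (h5 : v₁ ≤ v₂) :
    0 ≤ min u₂ (min v₂ (max (u₂ - 1 + θ) 0 + max (v₂ - θ) 0))
      - min u₁ (min v₂ (max (u₁ - 1 + θ) 0 + max (v₂ - θ) 0))
      - min u₂ (min v₁ (max (u₂ - 1 + θ) 0 + max (v₁ - θ) 0))
      + min u₁ (min v₁ (max (u₁ - 1 + θ) 0 + max (v₁ - θ) 0)) := by
  set f₁ := max (u₁ - 1 + θ) 0 with hf₁
  set f₂ := max (u₂ - 1 + θ) 0 with hf₂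
  set g₁ := max (v₁ - θ) 0 with hg₁
  set g₂ := max (v₂ - θ) 0 with hg₂
  have hfm : f₁ ≤ f₂ := max_le_max (by linarith) le_rfl
  have hgm : g₁ ≤ g₂ := max_le_max (by linarith) le_rfl
  have hfL : f₂ - f₁ ≤ u₂ - u₁ := by
    rw [hf₁, hf₂]
    rcases le_total (u₁ - 1 + θ) 0 with h | h <;> rcases le_total (u₂ - 1 + θ) 0 with h' | h' <;>
      simp [max_eq_left, max_eq_right, *] <;> linarith
  have hgL : g₂ - g₁ ≤ v₂ - v₁ := by
    rw [hg₁, hg₂]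
    rcases le_total (v₁ - θ) 0 with h | h <;> rcases le_total (v₂ - θ) 0 with h' | h' <;>
      simp [max_eq_left, max_eq_right, *] <;> linarith
  set A := min u₂ (min v₂ (f₂ + g₂)) with hA
  set B := min u₁ (min v₂ (f₁ + g₂)) with hB
  set E := min u₂ (min v₁ (f₂ + g₁)) with hE
  set D := min u₁ (min v₁ (f₁ + g₁)) with hD
  have hB1 : B ≤ u₁ := min_le_left _ _
  have hB2 : B ≤ v₂ := le_trans (min_le_right _ _) (min_le_left _ _)
  have hB3 : B ≤ f₁ + g₂ := le_trans (min_le_right _ _) (min_le_right _ _)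
  have hE1 : E ≤ u₂ := min_le_left _ _
  have hE2 : E ≤ v₁ := le_trans (min_le_right _ _) (min_le_left _ _)
  have hE3 : E ≤ f₂ + g₁ := le_trans (min_le_right _ _) (min_le_right _ _)
  have hAc : A = u₂ ∨ A = v₂ ∨ A = f₂ + g₂ := by
    rw [hA]
    rcases le_total u₂ (min v₂ (f₂ + g₂)) with h | h
    · exact Or.inl (min_eq_left h)
    · rw [min_eq_right h]
      rcases le_total v₂ (f₂ + g₂) with h' | h'
      · exact Or.inr (Or.inl (min_eq_left h'))
      · exact Or.inr (Or.inr (min_eq_right h'))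
  have hDc : D = u₁ ∨ D = v₁ ∨ D = f₁ + g₁ := by
    rw [hD]
    rcases le_total u₁ (min v₁ (f₁ + g₁)) with h | h
    · exact Or.inl (min_eq_left h)
    · rw [min_eq_right h]
      rcases le_total v₁ (f₁ + g₁) with h' | h'
      · exact Or.inr (Or.inl (min_eq_left h'))
      · exact Or.inr (Or.inr (min_eq_right h'))
  rcases hAc with hAv | hAv | hAv <;> rcases hDc with hDv | hDv | hDv <;> linarith

theorem stmt6 (θ : ℝ) (hθ : θ ∈ Set.Icc (0:ℝ) (1/3)) : IsCopula (Mtheta θ) := by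
  obtain ⟨hθ0, hθ1⟩ := hθ
  refine ⟨?_, ?_, ?_, ?_, ?_⟩
  · intro u hu
    simp only [Mtheta, min_def, max_def]
    split_ifs <;> linarith [hu.1, hu.2]
  · intro v hv
    simp only [Mtheta, min_def, max_def]
    split_ifs <;> linarith [hv.1, hv.2]
  · intro u hu
    simp only [Mtheta, min_def, max_def]
    split_ifs <;> linarith [hu.1, hu.2]
  · intro v hv
    simp only [Mtheta, min_def, max_def]
    split_ifs <;> linarith [hv.1, hv.2]
  · intro u₁ u₂ v₁ v₂ h1 h2 h3 h4 h5 h6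
    simp only [Mtheta]
    exact aux_incr θ u₁ u₂ v₁ v₂ h2 h5
end
end

section
/- For every θ ∈ [0, 1/3], Spearman's rho of the copula M_θ equals 1 − 6θ + 6θ²: that is, 12 ∫_{[0,1]²} M_θ(u,v) du dv − 3 = 1 − 6θ + 6θ². In particular, ρ(M_{1/3}) = −1/3. -/
open MeasureTheory Set Filter

noncomputable section

lemma Mcont (θ : ℝ) : Continuous (Function.uncurry (Mtheta θ)) := by
  unfold Mtheta Function.uncurry; fun_prop

lemma integral_affine (a b c d : ℝ) : ∫ x in a..b, (c + d * x) = c*(b-a) + d/2*(b^2-a^2) := by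
  rw [intervalIntegral.integral_add (Continuous.intervalIntegrable (by continuity) _ _)
      (Continuous.intervalIntegrable (by continuity) _ _),
    intervalIntegral.integral_const, intervalIntegral.integral_const_mul, integral_id]
  simp; ring

lemma integral_quad (a b c d e : ℝ) :
    ∫ x in a..b, (c + d * x + e * x^2) = c*(b-a) + d/2*(b^2-a^2) + e/3*(b^3-a^3) := by
  rw [intervalIntegral.integral_add (Continuous.intervalIntegrable (by continuity) _ _)
      (Continuous.intervalIntegrable (by continuity) _ _),
    intervalIntegral.integral_add (Continuous.intervalIntegrable (by continuity) _ _)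
      (Continuous.intervalIntegrable (by continuity) _ _),
    intervalIntegral.integral_const, intervalIntegral.integral_const_mul,
    intervalIntegral.integral_const_mul, integral_id, integral_pow]
  simp; ring

lemma Minteg (θ u a b : ℝ) : IntervalIntegrable (fun v => Mtheta θ u v) volume a b :=
  Continuous.intervalIntegrable (by unfold Mtheta; fun_prop) _ _

lemma inner1 (θ u : ℝ) (hθ0 : 0 ≤ θ) (hu0 : 0 ≤ u) (hu : u ≤ 1-θ) :
    ∫ v in (0:ℝ)..1, Mtheta θ u v = (1-θ)*u - u^2/2 := by
  have h1 : ∫ v in (0:ℝ)..θ, Mtheta θ u v = 0 := by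
    rw [intervalIntegral.integral_congr (g := fun _ => (0:ℝ))
      (fun v hv => by
        rw [Set.uIcc_of_le hθ0] at hv
        unfold Mtheta
        rw [max_eq_right (by linarith : u - 1 + θ ≤ 0),
            max_eq_right (by linarith [hv.2] : v - θ ≤ 0), add_zero,
            min_eq_right hv.1, min_eq_right hu0])]
    simp
  have h2 : ∫ v in θ..(θ+u), Mtheta θ u v = -θ*(θ+u-θ) + 1/2*((θ+u)^2-θ^2) := by
    rw [intervalIntegral.integral_congr (g := fun v => -θ + 1*v)
      (fun v hv => by
        rw [Set.uIcc_of_le (by linarith : θ ≤ θ + u)] at hv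
        unfold Mtheta
        rw [max_eq_right (by linarith : u - 1 + θ ≤ 0),
            max_eq_left (by linarith [hv.1] : (0:ℝ) ≤ v - θ), zero_add,
            min_eq_right (by linarith : v - θ ≤ v),
            min_eq_right (by linarith [hv.2] : v - θ ≤ u)]
        ring)]
    rw [integral_affine]
  have h3 : ∫ v in (θ+u)..1, Mtheta θ u v = (1-(θ+u)) • u := by
    rw [intervalIntegral.integral_congr (g := fun _ => u)
      (fun v hv => by
        rw [Set.uIcc_of_le (by linarith : θ + u ≤ 1)] at hv
        unfold Mtheta
        rw [max_eq_right (by linarith : u - 1 + θ ≤ 0),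
            max_eq_left (by linarith [hv.1] : (0:ℝ) ≤ v - θ), zero_add,
            min_eq_right (by linarith : v - θ ≤ v),
            min_eq_left (by linarith [hv.1] : u ≤ v - θ)])]
    rw [intervalIntegral.integral_const]
  rw [← intervalIntegral.integral_add_adjacent_intervals (a := (0:ℝ)) (b := θ+u) (c := 1)
        (Minteg _ _ _ _) (Minteg _ _ _ _),
      ← intervalIntegral.integral_add_adjacent_intervals (a := (0:ℝ)) (b := θ) (c := θ+u)
        (Minteg _ _ _ _) (Minteg _ _ _ _), h1, h2, h3]
  simp only [smul_eq_mul]; ring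

lemma inner2 (θ u : ℝ) (hθ0 : 0 ≤ θ) (hθ1 : θ ≤ 1/3) (hu : 1-θ ≤ u) (hu1 : u ≤ 1) :
    ∫ v in (0:ℝ)..1, Mtheta θ u v = (θ-1) + (2-θ)*u - u^2/2 := by
  have ha0 : 0 ≤ u - 1 + θ := by linarith
  have haθ : u - 1 + θ ≤ θ := by linarith
  have h1 : ∫ v in (0:ℝ)..(u-1+θ), Mtheta θ u v = 0*((u-1+θ)-0) + 1/2*((u-1+θ)^2-0^2) := by
    rw [intervalIntegral.integral_congr (g := fun v => 0 + 1*v)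
      (fun v hv => by
        rw [Set.uIcc_of_le ha0] at hv
        unfold Mtheta
        rw [max_eq_left ha0, max_eq_right (by linarith [hv.2] : v - θ ≤ 0), add_zero,
            min_eq_left (by linarith [hv.2] : v ≤ u - 1 + θ),
            min_eq_right (by linarith [hv.2] : v ≤ u)]
        ring)]
    rw [integral_affine]
  have h2 : ∫ v in (u-1+θ)..θ, Mtheta θ u v = (θ-(u-1+θ)) • (u-1+θ) := by
    rw [intervalIntegral.integral_congr (g := fun _ => u-1+θ)
      (fun v hv => by
        rw [Set.uIcc_of_le haθ] at hv
        unfold Mtheta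
        rw [max_eq_left ha0, max_eq_right (by linarith [hv.2] : v - θ ≤ 0), add_zero,
            min_eq_right (by linarith [hv.1] : u - 1 + θ ≤ v),
            min_eq_right (by linarith : u - 1 + θ ≤ u)])]
    rw [intervalIntegral.integral_const]
  have h3 : ∫ v in θ..1, Mtheta θ u v = (u-1)*(1-θ) + 1/2*(1^2-θ^2) := by
    rw [intervalIntegral.integral_congr (g := fun v => (u-1) + 1*v)
      (fun v hv => by
        rw [Set.uIcc_of_le (by linarith : θ ≤ 1)] at hv
        unfold Mtheta
        rw [max_eq_left ha0, max_eq_left (by linarith [hv.1] : (0:ℝ) ≤ v - θ),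
            min_eq_right (by linarith [hv.2] : u - 1 + θ + (v - θ) ≤ v),
            min_eq_right (by linarith [hv.2] : u - 1 + θ + (v - θ) ≤ u)]
        ring)]
    rw [integral_affine]
  rw [← intervalIntegral.integral_add_adjacent_intervals (a := (0:ℝ)) (b := θ) (c := 1)
        (Minteg _ _ _ _) (Minteg _ _ _ _),
      ← intervalIntegral.integral_add_adjacent_intervals (a := (0:ℝ)) (b := u-1+θ) (c := θ)
        (Minteg _ _ _ _) (Minteg _ _ _ _), h1, h2, h3]
  simp only [smul_eq_mul]; ring

lemma key (θ : ℝ) (hθ0 : 0 ≤ θ) (hθ1 : θ ≤ 1/3) :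
    12 * (∫ x in unitSq, Mtheta θ x.1 x.2) - 3 = 1 - 6*θ + 6*θ^2 := by
  have hθ' : θ ≤ 1 - θ := by linarith
  have hint : IntegrableOn (fun x : ℝ×ℝ => Mtheta θ x.1 x.2) unitSq volume := by
    apply ContinuousOn.integrableOn_compact (isCompact_Icc.prod isCompact_Icc)
    exact (Mcont θ).continuousOn
  have hfub : (∫ x in unitSq, Mtheta θ x.1 x.2)
      = ∫ u in Icc (0:ℝ) 1, ∫ v in Icc (0:ℝ) 1, Mtheta θ u v := by
    rw [unitSq, Measure.volume_eq_prod] at hint ⊢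
    exact MeasureTheory.setIntegral_prod _ hint
  have hIcc : ∀ u : ℝ, (∫ v in Icc (0:ℝ) 1, Mtheta θ u v) = ∫ v in (0:ℝ)..1, Mtheta θ u v := by
    intro u
    rw [MeasureTheory.integral_Icc_eq_integral_Ioc,
      intervalIntegral.integral_of_le (by norm_num)]
  have houter : (∫ x in unitSq, Mtheta θ x.1 x.2)
      = ∫ u in (0:ℝ)..1, ∫ v in (0:ℝ)..1, Mtheta θ u v := by
    rw [hfub]
    simp only [hIcc]
    rw [MeasureTheory.integral_Icc_eq_integral_Ioc,
      intervalIntegral.integral_of_le (by norm_num)]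
  have hFc : Continuous fun u => ∫ v in (0:ℝ)..1, Mtheta θ u v :=
    intervalIntegral.continuous_parametric_intervalIntegral_of_continuous' (Mcont θ) 0 1
  have hsplit : (∫ u in (0:ℝ)..1, ∫ v in (0:ℝ)..1, Mtheta θ u v)
      = (∫ u in (0:ℝ)..(1-θ), ∫ v in (0:ℝ)..1, Mtheta θ u v)
      + ∫ u in (1-θ)..1, ∫ v in (0:ℝ)..1, Mtheta θ u v := by
    rw [intervalIntegral.integral_add_adjacent_intervals
      (hFc.intervalIntegrable _ _) (hFc.intervalIntegrable _ _)]
  have hp1 : (∫ u in (0:ℝ)..(1-θ), ∫ v in (0:ℝ)..1, Mtheta θ u v)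
      = 0*((1-θ)-0) + (1-θ)/2*((1-θ)^2-0^2) + (-(1/2))/3*((1-θ)^3-0^3) := by
    rw [intervalIntegral.integral_congr (g := fun u => 0 + (1-θ)*u + (-(1/2))*u^2)
      (fun u hu => by
        rw [Set.uIcc_of_le (by linarith : (0:ℝ) ≤ 1-θ)] at hu
        rw [inner1 θ u hθ0 hu.1 hu.2]; ring)]
    rw [integral_quad]
  have hp2 : (∫ u in (1-θ)..1, ∫ v in (0:ℝ)..1, Mtheta θ u v)
      = (θ-1)*(1-(1-θ)) + (2-θ)/2*(1^2-(1-θ)^2) + (-(1/2))/3*(1^3-(1-θ)^3) := by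
    rw [intervalIntegral.integral_congr (g := fun u => (θ-1) + (2-θ)*u + (-(1/2))*u^2)
      (fun u hu => by
        rw [Set.uIcc_of_le (by linarith : 1-θ ≤ 1)] at hu
        rw [inner2 θ u hθ0 hθ1 hu.1 hu.2]; ring)]
    rw [integral_quad]
  rw [houter, hsplit, hp1, hp2]; ring

theorem stmt7 (θ : ℝ) (hθ : θ ∈ Set.Icc (0:ℝ) (1/3)) :
    (12 * (∫ x in unitSq, Mtheta θ x.1 x.2) - 3 = 1 - 6*θ + 6*θ^2) ∧
    12 * (∫ x in unitSq, Mtheta (1/3) x.1 x.2) - 3 = -(1/3) := by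
  refine ⟨key θ hθ.1 hθ.2, ?_⟩
  have := key (1/3) (by norm_num) (by norm_num)
  rw [this]; norm_num
end
end

section
/- For every θ ∈ [0, 1/3], the degree of non-exchangeability of the copula M_θ in the supremum norm equals θ: sup_{(u,v) ∈ [0,1]²} |M_θ(u,v) − M_θ(v,u)| = θ. In particular, M_{1/3} attains the maximal value 1/3 of μ_∞ over all copulas. -/
open MeasureTheory Set Filter

noncomputable section

lemma Mtheta_key (θ u v : ℝ) (hθ : 0 ≤ θ) : Mtheta θ u v - Mtheta θ v u ≤ θ := by
  unfold Mtheta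
  have hA1 : min u (min v (max (u - 1 + θ) 0 + max (v - θ) 0)) ≤ u := min_le_left _ _
  have hA2 : min u (min v (max (u - 1 + θ) 0 + max (v - θ) 0)) ≤ v :=
    le_trans (min_le_right _ _) (min_le_left _ _)
  have h1 : u - θ ≤ max (u - θ) 0 := le_max_left _ _
  have h2 : (0:ℝ) ≤ max (v - 1 + θ) 0 := le_max_right _ _
  have hB : min u (min v (max (u - 1 + θ) 0 + max (v - θ) 0)) - θ ≤
      min v (min u (max (v - 1 + θ) 0 + max (u - θ) 0)) :=
    le_min (by linarith) (le_min (by linarith) (by linarith))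
  linarith

lemma Mtheta_abs (θ u v : ℝ) (hθ : 0 ≤ θ) : |Mtheta θ u v - Mtheta θ v u| ≤ θ :=
  abs_sub_le_iff.mpr ⟨Mtheta_key θ u v hθ, Mtheta_key θ v u hθ⟩

lemma biSup_eq_of {f : ℝ → ℝ} {S : Set ℝ} {θ : ℝ} (hθ : 0 ≤ θ)
    (hub : ∀ v ∈ S, f v ≤ θ) {v₀ : ℝ} (hv₀ : v₀ ∈ S) (heq : f v₀ = θ) :
    (⨆ v ∈ S, f v) = θ := by
  have hb : ∀ v : ℝ, (⨆ _ : v ∈ S, f v) ≤ θ := fun v =>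
    Real.iSup_le (fun hv => hub v hv) hθ
  apply le_antisymm
  · exact Real.iSup_le hb hθ
  · have hbdd : BddAbove (Set.range fun v => ⨆ _ : v ∈ S, f v) := by
      refine ⟨θ, ?_⟩
      rintro x ⟨v, rfl⟩
      exact hb v
    calc θ = f v₀ := heq.symm
    _ = ⨆ _ : v₀ ∈ S, f v₀ := by rw [ciSup_pos hv₀]
    _ ≤ _ := le_ciSup hbdd v₀

theorem stmt8 (θ : ℝ) (hθ : θ ∈ Set.Icc (0:ℝ) (1/3)) :
    (⨆ u ∈ Set.Icc (0:ℝ) 1, ⨆ v ∈ Set.Icc (0:ℝ) 1,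
      |Mtheta θ u v - Mtheta θ v u|) = θ := by
  obtain ⟨hθ0, hθ3⟩ := hθ
  have h1 : Mtheta θ θ (1 - θ) = θ := by
    unfold Mtheta
    rw [max_eq_right (by linarith : θ - 1 + θ ≤ 0),
      max_eq_left (by linarith : (0:ℝ) ≤ 1 - θ - θ),
      min_eq_left (le_min (by linarith) (by linarith))]
  have h2 : Mtheta θ (1 - θ) θ = 0 := by
    unfold Mtheta
    rw [show (1 - θ - 1 + θ : ℝ) = 0 by ring, sub_self, max_self, add_zero,
      min_eq_right hθ0, min_eq_right (by linarith)]
  refine biSup_eq_of hθ0 ?_ (v₀ := θ) ?_ ?_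
  · intro u _
    exact Real.iSup_le (fun v => Real.iSup_le (fun _ => Mtheta_abs θ u v hθ0) hθ0) hθ0
  · exact Set.mem_Icc.mpr ⟨hθ0, by linarith⟩
  · refine biSup_eq_of hθ0 ?_ (v₀ := 1 - θ) ?_ ?_
    · intro v _
      exact Mtheta_abs θ θ v hθ0
    · exact Set.mem_Icc.mpr ⟨by linarith, by linarith⟩
    · rw [h1, h2]
      simpa using hθ0
end
end

section
/- For every μ₀ ∈ [0, 1/3] and every r₀ ∈ [2μ₀ − 1, 1 − 4μ₀], there exists a bivariate copula C such that sup_{(u,v) ∈ [0,1]²} |C(u,v) − C(v,u)| = μ₀ and ρ(C) = r₀; one may take C = θ·M_{1/3} + (1−θ)·C_s with θ = 3μ₀ and a suitable symmetric copula C_s. -/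
open MeasureTheory Set Filter

noncomputable section

/-! ### Auxiliary lemmas -/

lemma min_rect (a₁ a₂ b₁ b₂ : ℝ) (ha : a₁ ≤ a₂) (hb : b₁ ≤ b₂) :
    0 ≤ min a₂ b₂ - min a₁ b₂ - min a₂ b₁ + min a₁ b₁ := by
  rcases min_cases a₂ b₂ with ⟨h,h'⟩|⟨h,h'⟩ <;> rcases min_cases a₁ b₂ with ⟨h2,h2'⟩|⟨h2,h2'⟩ <;>
    rcases min_cases a₂ b₁ with ⟨h3,h3'⟩|⟨h3,h3'⟩ <;> rcases min_cases a₁ b₁ with ⟨h4,h4'⟩|⟨h4,h4'⟩ <;>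
    linarith

lemma W_rect (u₁ u₂ v₁ v₂ : ℝ) (hu : u₁ ≤ u₂) (hv : v₁ ≤ v₂) :
    0 ≤ max (u₂+v₂-1) 0 - max (u₁+v₂-1) 0 - max (u₂+v₁-1) 0 + max (u₁+v₁-1) 0 := by
  rcases max_cases (u₂+v₂-1) (0:ℝ) with ⟨h,h'⟩|⟨h,h'⟩ <;> rcases max_cases (u₁+v₂-1) (0:ℝ) with ⟨h2,h2'⟩|⟨h2,h2'⟩ <;>
    rcases max_cases (u₂+v₁-1) (0:ℝ) with ⟨h3,h3'⟩|⟨h3,h3'⟩ <;> rcases max_cases (u₁+v₁-1) (0:ℝ) with ⟨h4,h4'⟩|⟨h4,h4'⟩ <;>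
    linarith

lemma Mid (u v : ℝ) (h0u : 0 ≤ u) (hu1 : u ≤ 1) (h0v : 0 ≤ v) (hv1 : v ≤ 1) :
    Mtheta (1/3) u v
      = min (min u (2/3)) (max (v-1/3) 0) + min (max (u-2/3) 0) (min v (1/3)) := by
  have e : u - 1 + 1/3 = u - 2/3 := by ring
  unfold Mtheta
  rw [e]
  rcases le_total u (2/3) with h1|h1 <;> rcases le_total v (1/3) with h2|h2
  · rw [max_eq_right (by linarith : u - 2/3 ≤ (0:ℝ)),
       max_eq_right (by linarith : v - 1/3 ≤ (0:ℝ)), min_eq_left h1]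
    have e1 : min v ((0:ℝ)+0) = 0 := by simpa using min_eq_right h0v
    have e2 : min u (0:ℝ) = 0 := min_eq_right h0u
    have e3 : min (0:ℝ) (min v (1/3)) = 0 := min_eq_left (le_min h0v (by norm_num))
    rw [e1, e2, e3]; ring
  · rw [max_eq_right (by linarith : u - 2/3 ≤ (0:ℝ)),
       max_eq_left (by linarith : (0:ℝ) ≤ v - 1/3), min_eq_left h1]
    have e1 : min v ((0:ℝ)+(v-1/3)) = v - 1/3 := by
      rw [zero_add]; exact min_eq_right (by linarith)
    have e3 : min (0:ℝ) (min v (1/3)) = 0 := min_eq_left (le_min h0v (by norm_num))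
    rw [e1, e3, add_zero]
  · rw [max_eq_left (by linarith : (0:ℝ) ≤ u - 2/3),
       max_eq_right (by linarith : v - 1/3 ≤ (0:ℝ))]
    have e1 : u - 2/3 + 0 = u - 2/3 := add_zero _
    rw [e1, min_eq_right ((min_le_left v (u-2/3)).trans (by linarith : v ≤ u)),
        min_eq_right h1, min_eq_right (by norm_num : (0:ℝ) ≤ 2/3)]
    rw [min_eq_left h2, zero_add, min_comm]
  · have e0 : u - 2/3 + (v - 1/3) = u + v - 1 := by ring
    rw [max_eq_left (by linarith : (0:ℝ) ≤ u - 2/3),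
       max_eq_left (by linarith : (0:ℝ) ≤ v - 1/3), e0,
       min_eq_right (by linarith : u+v-1 ≤ v), min_eq_right (by linarith : u+v-1 ≤ u),
       min_eq_right h1, min_eq_right (by linarith : v - 1/3 ≤ 2/3),
       min_eq_right h2, min_eq_left (by linarith : u - 2/3 ≤ 1/3)]
    ring

lemma isCopula_min : IsCopula (fun u v => min u v) := by
  refine ⟨fun u hu => min_eq_right hu.1, fun v hv => min_eq_left hv.1,
    fun u hu => min_eq_left hu.2, fun v hv => min_eq_right hv.2,
    fun u₁ u₂ v₁ v₂ _ h12 _ _ h34 _ => min_rect _ _ _ _ h12 h34⟩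

lemma isCopula_W : IsCopula (fun u v => max (u+v-1) 0) := by
  refine ⟨fun u hu => max_eq_right (by linarith [hu.2]), fun v hv => max_eq_right (by linarith [hv.2]),
    fun u hu => ?_, fun v hv => ?_,
    fun u₁ u₂ v₁ v₂ _ h12 _ _ h34 _ => W_rect _ _ _ _ h12 h34⟩
  · show max (u + 1 - 1) 0 = u
    rw [show u + 1 - 1 = u by ring]; exact max_eq_left hu.1
  · show max (1 + v - 1) 0 = v
    rw [show (1:ℝ) + v - 1 = v by ring]; exact max_eq_left hv.1

lemma isCopula_M13 : IsCopula (Mtheta (1/3)) := by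
  refine ⟨fun u hu => ?_, fun v hv => ?_, fun u hu => ?_, fun v hv => ?_,
    fun u₁ u₂ v₁ v₂ h1 h12 h2 h3 h34 h4 => ?_⟩
  · refine le_antisymm ((min_le_right _ _).trans (min_le_left _ _))
      (le_min hu.1 (le_min le_rfl (by positivity)))
  · exact le_antisymm (min_le_left _ _) (le_min le_rfl (le_min hv.1 (by positivity)))
  · unfold Mtheta
    refine min_eq_left (le_min hu.2 ?_)
    have h1 : max (u - 1 + 1/3) 0 ≥ u - 2/3 := by
      rw [show u - 1 + 1/3 = u - 2/3 by ring]; exact le_max_left _ _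
    have h2 : max (1 - 1/3 : ℝ) 0 = 2/3 := by norm_num
    rw [h2]; linarith
  · unfold Mtheta
    have h2 : max (1 - 1 + 1/3 : ℝ) 0 = 1/3 := by norm_num
    rw [h2]
    refine le_antisymm ((min_le_right _ _).trans (min_le_left _ _))
      (le_min hv.2 (le_min le_rfl (by linarith [le_max_left (v - 1/3) (0:ℝ)])))
  · rw [Mid _ _ (by linarith) (by linarith) (by linarith) (by linarith),
      Mid _ _ (by linarith) (by linarith) (by linarith) (by linarith),
      Mid _ _ (by linarith) (by linarith) (by linarith) (by linarith),
      Mid _ _ (by linarith) (by linarith) (by linarith) (by linarith)]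
    have A := min_rect (min u₁ (2/3)) (min u₂ (2/3)) (max (v₁-1/3) 0) (max (v₂-1/3) 0)
      (min_le_min_right _ h12) (max_le_max (by linarith) le_rfl)
    have B := min_rect (max (u₁-2/3) 0) (max (u₂-2/3) 0) (min v₁ (1/3)) (min v₂ (1/3))
      (max_le_max (by linarith) le_rfl) (min_le_min_right _ h34)
    linarith

lemma isCopula_conv {C₁ C₂ : ℝ→ℝ→ℝ} (h₁ : IsCopula C₁) (h₂ : IsCopula C₂) {t : ℝ}
    (ht0 : 0 ≤ t) (ht1 : t ≤ 1) : IsCopula (fun u v => t * C₁ u v + (1-t) * C₂ u v) := by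
  obtain ⟨a1,b1,c1,d1,e1⟩ := h₁; obtain ⟨a2,b2,c2,d2,e2⟩ := h₂
  refine ⟨fun u hu => ?_, fun v hv => ?_, fun u hu => ?_, fun v hv => ?_,
    fun u₁ u₂ v₁ v₂ p1 p2 p3 p4 p5 p6 => ?_⟩
  · show t * C₁ u 0 + (1-t) * C₂ u 0 = 0
    rw [a1 u hu, a2 u hu]; ring
  · show t * C₁ 0 v + (1-t) * C₂ 0 v = 0
    rw [b1 v hv, b2 v hv]; ring
  · show t * C₁ u 1 + (1-t) * C₂ u 1 = u
    rw [c1 u hu, c2 u hu]; ring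
  · show t * C₁ 1 v + (1-t) * C₂ 1 v = v
    rw [d1 v hv, d2 v hv]; ring
  · have h₁ := e1 u₁ u₂ v₁ v₂ p1 p2 p3 p4 p5 p6
    have h₂ := e2 u₁ u₂ v₁ v₂ p1 p2 p3 p4 p5 p6
    show 0 ≤ (t * C₁ u₂ v₂ + (1-t) * C₂ u₂ v₂) - (t * C₁ u₁ v₂ + (1-t) * C₂ u₁ v₂)
        - (t * C₁ u₂ v₁ + (1-t) * C₂ u₂ v₁) + (t * C₁ u₁ v₁ + (1-t) * C₂ u₁ v₁)
    nlinarith [mul_nonneg ht0 h₁, mul_nonneg (by linarith : (0:ℝ) ≤ 1 - t) h₂]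

lemma M_key (a b : ℝ) (h0a : 0 ≤ a) (ha1 : a ≤ 1) (h0b : 0 ≤ b) (hb1 : b ≤ 1) :
    Mtheta (1/3) a b - Mtheta (1/3) b a ≤ 1/3 := by
  have l1 : Mtheta (1/3) a b ≤ a := min_le_left _ _
  have l2 : Mtheta (1/3) a b ≤ b := (min_le_right _ _).trans (min_le_left _ _)
  have l3 : 0 ≤ Mtheta (1/3) b a := le_min h0b (le_min h0a (by positivity))
  rcases le_total a (1/3) with h|h
  · linarith
  · have l4 : min b (a - 1/3) ≤ Mtheta (1/3) b a := by
      unfold Mtheta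
      refine le_min (min_le_left _ _) (le_min ((min_le_right _ _).trans (by linarith)) ?_)
      have := le_max_right (b - 1 + 1/3) (0:ℝ)
      have := le_max_left (a - 1/3) (0:ℝ)
      have := min_le_right b (a - 1/3)
      linarith
    rcases min_cases b (a - 1/3) with ⟨h5,h5'⟩|⟨h5,h5'⟩ <;> linarith

lemma M_diff_abs (a b : ℝ) (h0a : 0 ≤ a) (ha1 : a ≤ 1) (h0b : 0 ≤ b) (hb1 : b ≤ 1) :
    |Mtheta (1/3) a b - Mtheta (1/3) b a| ≤ 1/3 :=
  abs_sub_le_iff.2 ⟨M_key a b h0a ha1 h0b hb1, M_key b a h0b hb1 h0a ha1⟩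

lemma M_wit1 : Mtheta (1/3) (1/3) (2/3) = 1/3 := by norm_num [Mtheta]
lemma M_wit2 : Mtheta (1/3) (2/3) (1/3) = 0 := by norm_num [Mtheta]

/-! ### Integral computations -/

lemma lin_int (a b c d : ℝ) : ∫ y in a..b, (c*y + d) = c*(b^2-a^2)/2 + d*(b-a) := by
  rw [intervalIntegral.integral_add (Continuous.intervalIntegrable (by fun_prop) a b)
    (intervalIntegrable_const), intervalIntegral.integral_const_mul, integral_id,
    intervalIntegral.integral_const, smul_eq_mul]
  ring

lemma quad_int (a b c d e : ℝ) :
    ∫ y in a..b, (c*y^2 + (d*y + e)) = c*(b^3-a^3)/3 + (d*(b^2-a^2)/2 + e*(b-a)) := by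
  rw [intervalIntegral.integral_add (Continuous.intervalIntegrable (by fun_prop) a b)
    (Continuous.intervalIntegrable (by fun_prop) a b),
    intervalIntegral.integral_const_mul, integral_pow, lin_int]
  norm_num
  ring

lemma icc_to_ii (f : ℝ → ℝ) : ∫ y in Icc (0:ℝ) 1, f y = ∫ y in (0:ℝ)..1, f y := by
  rw [integral_Icc_eq_integral_Ioc, intervalIntegral.integral_of_le (by norm_num)]

lemma int_sq (f : ℝ × ℝ → ℝ) (hf : Continuous f) :
    ∫ z in (Icc (0:ℝ) 1 ×ˢ Icc (0:ℝ) 1), f z = ∫ x in Icc (0:ℝ) 1, ∫ y in Icc (0:ℝ) 1, f (x,y) := by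
  have hint : IntegrableOn f (Icc (0:ℝ) 1 ×ˢ Icc (0:ℝ) 1) (volume.prod volume) := by
    rw [← Measure.volume_eq_prod]
    exact hf.continuousOn.integrableOn_compact (isCompact_Icc.prod isCompact_Icc)
  rw [Measure.volume_eq_prod, MeasureTheory.setIntegral_prod f hint]

lemma inner_min (x : ℝ) (hx : x ∈ Icc (0:ℝ) 1) :
    ∫ y in Icc (0:ℝ) 1, min x y = x - x^2/2 := by
  rw [icc_to_ii]
  have h1 : IntervalIntegrable (fun y => min x y) volume 0 x :=
    Continuous.intervalIntegrable (by fun_prop) _ _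
  have h2 : IntervalIntegrable (fun y => min x y) volume x 1 :=
    Continuous.intervalIntegrable (by fun_prop) _ _
  rw [← intervalIntegral.integral_add_adjacent_intervals h1 h2]
  have e1 : ∫ y in (0:ℝ)..x, min x y = ∫ y in (0:ℝ)..x, y := by
    refine intervalIntegral.integral_congr fun y hy => ?_
    rw [uIcc_of_le hx.1] at hy
    exact min_eq_right hy.2
  have e2 : ∫ y in x..1, min x y = ∫ y in x..1, (fun _ => x) y := by
    refine intervalIntegral.integral_congr fun y hy => ?_
    rw [uIcc_of_le hx.2] at hy
    exact min_eq_left hy.1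
  rw [e1, e2, integral_id, intervalIntegral.integral_const, smul_eq_mul]
  ring

lemma inner_W (x : ℝ) (hx : x ∈ Icc (0:ℝ) 1) :
    ∫ y in Icc (0:ℝ) 1, max (x+y-1) 0 = x^2/2 := by
  rw [icc_to_ii]
  have h1 : IntervalIntegrable (fun y => max (x+y-1) 0) volume 0 (1-x) :=
    Continuous.intervalIntegrable (by fun_prop) _ _
  have h2 : IntervalIntegrable (fun y => max (x+y-1) 0) volume (1-x) 1 :=
    Continuous.intervalIntegrable (by fun_prop) _ _
  rw [← intervalIntegral.integral_add_adjacent_intervals h1 h2]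
  have e1 : ∫ y in (0:ℝ)..(1-x), max (x+y-1) 0 = ∫ y in (0:ℝ)..(1-x), (fun _ => (0:ℝ)) y := by
    refine intervalIntegral.integral_congr fun y hy => ?_
    rw [uIcc_of_le (by linarith [hx.2] : (0:ℝ) ≤ 1-x)] at hy
    exact max_eq_right (by linarith [hy.2])
  have e2 : ∫ y in (1-x)..1, max (x+y-1) 0 = ∫ y in (1-x)..1, (1*y + (x-1)) := by
    refine intervalIntegral.integral_congr fun y hy => ?_
    rw [uIcc_of_le (by linarith [hx.1] : 1-x ≤ (1:ℝ))] at hy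
    rw [max_eq_left (by linarith [hy.1])]; ring
  rw [e1, e2, lin_int, intervalIntegral.integral_const, smul_eq_mul]
  ring

lemma inner_M (x : ℝ) (hx : x ∈ Icc (0:ℝ) 1) :
    ∫ y in Icc (0:ℝ) 1, Mtheta (1/3) x y = 2/3*x - x^2/2 + max (x-2/3) 0 := by
  obtain ⟨h0x, hx1⟩ := hx
  rw [icc_to_ii]
  have hc : Continuous (fun y => Mtheta (1/3) x y) := by unfold Mtheta; fun_prop
  rcases le_total x (2/3) with h|h
  · rw [max_eq_right (by linarith)]
    have h1 : IntervalIntegrable (fun y => Mtheta (1/3) x y) volume 0 (1/3) := hc.intervalIntegrable _ _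
    have h2 : IntervalIntegrable (fun y => Mtheta (1/3) x y) volume (1/3) (1/3+x) := hc.intervalIntegrable _ _
    have h3 : IntervalIntegrable (fun y => Mtheta (1/3) x y) volume (1/3+x) 1 := hc.intervalIntegrable _ _
    rw [← intervalIntegral.integral_add_adjacent_intervals (h1.trans h2) h3,
        ← intervalIntegral.integral_add_adjacent_intervals h1 h2]
    have e1 : ∫ y in (0:ℝ)..(1/3), Mtheta (1/3) x y = ∫ y in (0:ℝ)..(1/3), (fun _ => (0:ℝ)) y := by
      refine intervalIntegral.integral_congr fun y hy => ?_
      rw [uIcc_of_le (by norm_num : (0:ℝ) ≤ 1/3)] at hy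
      unfold Mtheta
      rw [max_eq_right (by linarith : x - 1 + 1/3 ≤ 0), max_eq_right (by linarith [hy.2] : y - 1/3 ≤ 0)]
      simp only [add_zero]
      rw [min_eq_right hy.1, min_eq_right h0x]
    have e2 : ∫ y in (1/3:ℝ)..(1/3+x), Mtheta (1/3) x y = ∫ y in (1/3:ℝ)..(1/3+x), (1*y + (-1/3)) := by
      refine intervalIntegral.integral_congr fun y hy => ?_
      rw [uIcc_of_le (by linarith : (1/3:ℝ) ≤ 1/3+x)] at hy
      unfold Mtheta
      rw [max_eq_right (by linarith : x - 1 + 1/3 ≤ 0), max_eq_left (by linarith [hy.1] : (0:ℝ) ≤ y - 1/3)]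
      rw [zero_add, min_eq_right (by linarith : y - 1/3 ≤ y), min_eq_right (by linarith [hy.2] : y - 1/3 ≤ x)]
      ring
    have e3 : ∫ y in (1/3+x:ℝ)..1, Mtheta (1/3) x y = ∫ y in (1/3+x:ℝ)..1, (fun _ => x) y := by
      refine intervalIntegral.integral_congr fun y hy => ?_
      rw [uIcc_of_le (by linarith : (1/3+x:ℝ) ≤ 1)] at hy
      unfold Mtheta
      rw [max_eq_right (by linarith : x - 1 + 1/3 ≤ 0), max_eq_left (by linarith [hy.1] : (0:ℝ) ≤ y - 1/3)]
      rw [zero_add, min_eq_right (by linarith : y - 1/3 ≤ y), min_eq_left (by linarith [hy.1] : x ≤ y - 1/3)]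
    rw [e1, e2, e3, lin_int, intervalIntegral.integral_const, intervalIntegral.integral_const,
      smul_eq_mul, smul_eq_mul]
    ring
  · rw [max_eq_left (by linarith)]
    have h1 : IntervalIntegrable (fun y => Mtheta (1/3) x y) volume 0 (x-2/3) := hc.intervalIntegrable _ _
    have h2 : IntervalIntegrable (fun y => Mtheta (1/3) x y) volume (x-2/3) (1/3) := hc.intervalIntegrable _ _
    have h3 : IntervalIntegrable (fun y => Mtheta (1/3) x y) volume (1/3) 1 := hc.intervalIntegrable _ _
    rw [← intervalIntegral.integral_add_adjacent_intervals (h1.trans h2) h3,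
        ← intervalIntegral.integral_add_adjacent_intervals h1 h2]
    have e1 : ∫ y in (0:ℝ)..(x-2/3), Mtheta (1/3) x y = ∫ y in (0:ℝ)..(x-2/3), y := by
      refine intervalIntegral.integral_congr fun y hy => ?_
      rw [uIcc_of_le (by linarith : (0:ℝ) ≤ x-2/3)] at hy
      unfold Mtheta
      rw [max_eq_left (by linarith : (0:ℝ) ≤ x - 1 + 1/3), max_eq_right (by linarith [hy.2] : y - 1/3 ≤ 0)]
      rw [add_zero, min_eq_left (by linarith [hy.2] : y ≤ x - 1 + 1/3), min_eq_right (by linarith [hy.2] : y ≤ x)]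
    have e2 : ∫ y in (x-2/3:ℝ)..(1/3), Mtheta (1/3) x y = ∫ y in (x-2/3:ℝ)..(1/3), (fun _ => x - 1 + 1/3) y := by
      refine intervalIntegral.integral_congr fun y hy => ?_
      rw [uIcc_of_le (by linarith : (x-2/3:ℝ) ≤ 1/3)] at hy
      unfold Mtheta
      rw [max_eq_left (by linarith : (0:ℝ) ≤ x - 1 + 1/3), max_eq_right (by linarith [hy.2] : y - 1/3 ≤ 0)]
      rw [add_zero, min_eq_right (by linarith [hy.1] : x - 1 + 1/3 ≤ y), min_eq_right (by linarith : x - 1 + 1/3 ≤ x)]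
    have e3 : ∫ y in (1/3:ℝ)..1, Mtheta (1/3) x y = ∫ y in (1/3:ℝ)..1, (1*y + (x-1)) := by
      refine intervalIntegral.integral_congr fun y hy => ?_
      rw [uIcc_of_le (by norm_num : (1/3:ℝ) ≤ 1)] at hy
      unfold Mtheta
      rw [max_eq_left (by linarith : (0:ℝ) ≤ x - 1 + 1/3), max_eq_left (by linarith [hy.1] : (0:ℝ) ≤ y - 1/3)]
      rw [show x - 1 + 1/3 + (y - 1/3) = x + y - 1 by ring,
        min_eq_right (by linarith : x + y - 1 ≤ y), min_eq_right (by linarith [hy.2] : x + y - 1 ≤ x)]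
      ring
    rw [e1, e2, e3, lin_int, integral_id, intervalIntegral.integral_const, smul_eq_mul]
    ring

lemma hmax_int : ∫ x in (0:ℝ)..1, max (x-2/3) 0 = 1/18 := by
  have h1 : IntervalIntegrable (fun x => max (x-2/3) 0) volume 0 (2/3) :=
    Continuous.intervalIntegrable (by fun_prop) _ _
  have h2 : IntervalIntegrable (fun x => max (x-2/3) 0) volume (2/3) 1 :=
    Continuous.intervalIntegrable (by fun_prop) _ _
  rw [← intervalIntegral.integral_add_adjacent_intervals h1 h2]
  have e1 : ∫ x in (0:ℝ)..(2/3), max (x-2/3) 0 = ∫ x in (0:ℝ)..(2/3), (fun _ => (0:ℝ)) x := by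
    refine intervalIntegral.integral_congr fun x hx => ?_
    rw [uIcc_of_le (by norm_num : (0:ℝ) ≤ 2/3)] at hx
    exact max_eq_right (by linarith [hx.2])
  have e2 : ∫ x in (2/3:ℝ)..1, max (x-2/3) 0 = ∫ x in (2/3:ℝ)..1, (1*x + (-2/3)) := by
    refine intervalIntegral.integral_congr fun x hx => ?_
    rw [uIcc_of_le (by norm_num : (2/3:ℝ) ≤ 1)] at hx
    rw [max_eq_left (by linarith [hx.1])]; ring
  rw [e1, e2, lin_int, intervalIntegral.integral_const, smul_eq_mul]
  norm_num

/-- The candidate copula. -/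
def Ccand (μ₀ α : ℝ) : ℝ → ℝ → ℝ := fun u v =>
  (3*μ₀) * Mtheta (1/3) u v + (1-3*μ₀) * (α * min u v + (1-α) * max (u+v-1) 0)

lemma inner_C (μ₀ α x : ℝ) (hx : x ∈ Icc (0:ℝ) 1) :
    ∫ y in Icc (0:ℝ) 1, Ccand μ₀ α x y
      = 3*μ₀*(2/3*x - x^2/2 + max (x-2/3) 0)
        + ((1-3*μ₀)*α*(x - x^2/2) + (1-3*μ₀)*(1-α)*(x^2/2)) := by
  have hrw : (fun y => Ccand μ₀ α x y)
      = fun y => 3*μ₀ * Mtheta (1/3) x y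
          + ((1-3*μ₀)*α * min x y + (1-3*μ₀)*(1-α) * max (x+y-1) 0) :=
    funext fun y => by unfold Ccand; ring
  have hcM : Continuous (fun y => Mtheta (1/3) x y) := by unfold Mtheta; fun_prop
  have iM : IntegrableOn (fun y => 3*μ₀ * Mtheta (1/3) x y) (Icc (0:ℝ) 1) volume :=
    ((continuous_const.mul hcM).continuousOn).integrableOn_compact isCompact_Icc
  have imin : IntegrableOn (fun y => (1-3*μ₀)*α * min x y) (Icc (0:ℝ) 1) volume :=
    ((continuous_const.mul (continuous_const.min continuous_id)).continuousOn).integrableOn_compact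
      isCompact_Icc
  have iW : IntegrableOn (fun y => (1-3*μ₀)*(1-α) * max (x+y-1) 0) (Icc (0:ℝ) 1) volume :=
    ((continuous_const.mul (((continuous_const.add continuous_id).sub
      continuous_const).max continuous_const)).continuousOn).integrableOn_compact isCompact_Icc
  have iSum : IntegrableOn (fun y => (1-3*μ₀)*α * min x y
      + (1-3*μ₀)*(1-α) * max (x+y-1) 0) (Icc (0:ℝ) 1) volume := imin.add iW
  rw [hrw, integral_add iM iSum]
  rw [integral_add imin iW, integral_const_mul, integral_const_mul, integral_const_mul,
    inner_M x hx, inner_min x hx, inner_W x hx]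

lemma int_C (μ₀ α : ℝ) :
    ∫ z in (Icc (0:ℝ) 1 ×ˢ Icc (0:ℝ) 1), Ccand μ₀ α z.1 z.2
      = 3*μ₀*(2/9) + (1-3*μ₀)*(α*(1/3) + (1-α)*(1/6)) := by
  rw [int_sq _ (by unfold Ccand Mtheta; fun_prop)]
  rw [setIntegral_congr_fun measurableSet_Icc (fun x hx => inner_C μ₀ α x hx)]
  rw [icc_to_ii]
  have hrw : (fun x : ℝ => 3*μ₀*(2/3*x - x^2/2 + max (x-2/3) 0)
        + ((1-3*μ₀)*α*(x - x^2/2) + (1-3*μ₀)*(1-α)*(x^2/2)))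
      = fun x => ((3*μ₀*(-1/2) + (1-3*μ₀)*α*(-1/2) + (1-3*μ₀)*(1-α)*(1/2))*x^2
          + ((3*μ₀*(2/3) + (1-3*μ₀)*α)*x + 0)) + (3*μ₀) * max (x-2/3) 0 :=
    funext fun x => by ring
  rw [hrw, intervalIntegral.integral_add (Continuous.intervalIntegrable (by fun_prop) _ _)
      (Continuous.intervalIntegrable (by fun_prop) _ _),
    intervalIntegral.integral_const_mul, hmax_int, quad_int]
  ring

lemma Ccand_wit (μ₀ α : ℝ) : Ccand μ₀ α (1/3) (2/3) - Ccand μ₀ α (2/3) (1/3) = μ₀ := by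
  unfold Ccand
  rw [M_wit1, M_wit2, min_comm, show (1/3:ℝ)+2/3-1 = 2/3+1/3-1 by ring]
  ring

theorem stmt10 (μ₀ r₀ : ℝ) (hμ : μ₀ ∈ Set.Icc (0:ℝ) (1/3))
    (hr : r₀ ∈ Set.Icc (2*μ₀ - 1) (1 - 4*μ₀)) :
    ∃ C : ℝ → ℝ → ℝ, IsCopula C ∧
      (⨆ u ∈ Set.Icc (0:ℝ) 1, ⨆ v ∈ Set.Icc (0:ℝ) 1, |C u v - C v u|) = μ₀ ∧
      12 * (∫ x in unitSq, C x.1 x.2) - 3 = r₀ ∧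
      ∃ Cs : ℝ → ℝ → ℝ, IsCopula Cs ∧
        (∀ u ∈ Set.Icc (0:ℝ) 1, ∀ v ∈ Set.Icc (0:ℝ) 1, Cs u v = Cs v u) ∧
        C = fun u v => (3*μ₀) * Mtheta (1/3) u v + (1 - 3*μ₀) * Cs u v := by
  obtain ⟨hm0, hm1⟩ := hμ
  obtain ⟨hr1, hr2⟩ := hr
  set α : ℝ := if μ₀ = 1/3 then 0 else (r₀ + 1 - 2*μ₀)/(2*(1-3*μ₀)) with hα
  have hα0 : 0 ≤ α := by
    rw [hα]; split_ifs with h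
    · exact le_rfl
    · have hlt : μ₀ < 1/3 := lt_of_le_of_ne hm1 h
      apply div_nonneg <;> linarith
  have hα1 : α ≤ 1 := by
    rw [hα]; split_ifs with h
    · norm_num
    · have hlt : μ₀ < 1/3 := lt_of_le_of_ne hm1 h
      rw [div_le_one (by linarith)]; linarith
  have hkey : (1-3*μ₀)*(2+2*α) = r₀ + 3 - 8*μ₀ := by
    rw [hα]; split_ifs with h
    · subst h; norm_num at hr1 hr2 ⊢; linarith
    · have hlt : μ₀ < 1/3 := lt_of_le_of_ne hm1 h
      have hne : (1-3*μ₀) ≠ 0 := by linarith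
      field_simp
      ring
  have hpt : ∀ u ∈ Icc (0:ℝ) 1, ∀ v ∈ Icc (0:ℝ) 1,
      |Ccand μ₀ α u v - Ccand μ₀ α v u| ≤ μ₀ := by
    intro u hu v hv
    have hdiff : Ccand μ₀ α u v - Ccand μ₀ α v u
        = 3*μ₀*(Mtheta (1/3) u v - Mtheta (1/3) v u) := by
      unfold Ccand
      rw [min_comm v u, show v+u-1 = u+v-1 by ring]
      ring
    rw [hdiff, abs_mul, abs_of_nonneg (by linarith : (0:ℝ) ≤ 3*μ₀)]
    nlinarith [M_diff_abs u v hu.1 hu.2 hv.1 hv.2,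
      abs_nonneg (Mtheta (1/3) u v - Mtheta (1/3) v u)]
  refine ⟨Ccand μ₀ α, ?_, ?_, ?_,
    (fun u v => α * min u v + (1-α) * max (u+v-1) 0),
    isCopula_conv isCopula_min isCopula_W hα0 hα1,
    fun u _ v _ => by
      show α * min u v + (1-α) * max (u+v-1) 0 = α * min v u + (1-α) * max (v+u-1) 0
      rw [min_comm, show u+v-1 = v+u-1 by ring], rfl⟩
  · exact isCopula_conv isCopula_M13 (isCopula_conv isCopula_min isCopula_W hα0 hα1)
      (by linarith) (by linarith)
  · have h1 : ∀ u : ℝ, (⨆ (_ : u ∈ Icc (0:ℝ) 1),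
        ⨆ v ∈ Icc (0:ℝ) 1, |Ccand μ₀ α u v - Ccand μ₀ α v u|) ≤ μ₀ := by
      intro u
      refine Real.iSup_le (fun hu => ?_) hm0
      refine Real.iSup_le (fun v => ?_) hm0
      refine Real.iSup_le (fun hv => ?_) hm0
      exact hpt u hu v hv
    apply le_antisymm (Real.iSup_le h1 hm0)
    have hmem1 : (1/3:ℝ) ∈ Icc (0:ℝ) 1 := by norm_num
    have hmem2 : (2/3:ℝ) ∈ Icc (0:ℝ) 1 := by norm_num
    have hwit : |Ccand μ₀ α (1/3) (2/3) - Ccand μ₀ α (2/3) (1/3)| = μ₀ := by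
      rw [Ccand_wit]; exact abs_of_nonneg hm0
    refine le_ciSup_of_le ⟨μ₀, ?_⟩ (1/3:ℝ) ?_
    · rintro x ⟨u, rfl⟩; exact h1 u
    refine le_ciSup_of_le ⟨μ₀, ?_⟩ hmem1 ?_
    · rintro x ⟨hu, rfl⟩
      exact Real.iSup_le (fun v => Real.iSup_le (fun hv => hpt _ hmem1 _ hv) hm0) hm0
    refine le_ciSup_of_le ⟨μ₀, ?_⟩ (2/3:ℝ) ?_
    · rintro x ⟨v, rfl⟩
      exact Real.iSup_le (fun hv => hpt _ hmem1 _ hv) hm0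
    refine le_ciSup_of_le ⟨μ₀, ?_⟩ hmem2 ?_
    · rintro x ⟨hv, rfl⟩; exact hwit.le
    exact hwit.ge
  · show 12 * (∫ x in unitSq, Ccand μ₀ α x.1 x.2) - 3 = r₀
    unfold unitSq
    rw [int_C]
    linear_combination hkey
end
end

section
/- Let C be a bivariate copula, let p ∈ [1, ∞) be real with μ_p(C) > 0, and let μ₀ ∈ [0, μ_p(C)]. Set α := (1 + μ₀/μ_p(C))/2. Then α ∈ [1/2, 1] and the mixed copula C_α(u,v) := α·C(u,v) + (1−α)·C(v,u) satisfies μ_p(C_α) = μ₀. -/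
open MeasureTheory Set Filter

noncomputable section

theorem stmt13 (C : ℝ → ℝ → ℝ) (hC : IsCopula C) (p : ℝ) (hp : 1 ≤ p)
    (μ : ℝ) (hμdef : μ = (∫ x in unitSq, |C x.1 x.2 - C x.2 x.1| ^ p) ^ (1/p))
    (hμpos : 0 < μ) (μ₀ : ℝ) (hμ₀ : μ₀ ∈ Set.Icc 0 μ)
    (α : ℝ) (hα : α = (1 + μ₀ / μ) / 2)
    (Cα : ℝ → ℝ → ℝ) (hCα : ∀ u v : ℝ, Cα u v = α * C u v + (1 - α) * C v u) :
    α ∈ Set.Icc (1/2 : ℝ) 1 ∧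
    (∫ x in unitSq, |Cα x.1 x.2 - Cα x.2 x.1| ^ p) ^ (1/p) = μ₀ := by
  obtain ⟨hμ₀0, hμ₀μ⟩ := hμ₀
  have hp0 : (0:ℝ) < p := lt_of_lt_of_le one_pos hp
  have ht0 : 0 ≤ μ₀ / μ := div_nonneg hμ₀0 hμpos.le
  have ht1 : μ₀ / μ ≤ 1 := div_le_one_of_le₀ hμ₀μ hμpos.le
  constructor
  · constructor <;> rw [hα] <;> nlinarith
  have key : ∀ u v : ℝ, |Cα u v - Cα v u| ^ p = (μ₀/μ) ^ p * |C u v - C v u| ^ p := by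
    intro u v
    have h1 : Cα u v - Cα v u = (μ₀/μ) * (C u v - C v u) := by
      rw [hCα, hCα, hα]; ring
    rw [h1, abs_mul, abs_of_nonneg ht0, Real.mul_rpow ht0 (abs_nonneg _)]
  have hint : (∫ x in unitSq, |Cα x.1 x.2 - Cα x.2 x.1| ^ p)
      = (μ₀/μ) ^ p * ∫ x in unitSq, |C x.1 x.2 - C x.2 x.1| ^ p := by
    simp_rw [key]
    exact MeasureTheory.integral_const_mul _ _
  have hInonneg : 0 ≤ ∫ x in unitSq, |C x.1 x.2 - C x.2 x.1| ^ p :=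
    integral_nonneg fun x => Real.rpow_nonneg (abs_nonneg _) p
  rw [hint, Real.mul_rpow (Real.rpow_nonneg ht0 p) hInonneg,
    ← Real.rpow_mul ht0, mul_one_div, div_self (ne_of_gt hp0), Real.rpow_one,
    ← hμdef]
  field_simp
end
end

section
/- Let C and S be bivariate copulas with S symmetric (S(u,v) = S(v,u) for all (u,v)), and let β, γ ≥ 0 with β + γ ≤ 1. Set E(u,v) := β·C(u,v) + γ·C(v,u) + (1−β−γ)·S(u,v). Then E is a bivariate copula and, for every real p ∈ [1, ∞), (∫_{[0,1]²} |E(u,v) − E(v,u)|^p du dv)^{1/p} = |β − γ| · (∫_{[0,1]²} |C(u,v) − C(v,u)|^p du dv)^{1/p}. -/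
open MeasureTheory Set Filter

noncomputable section

theorem stmt18 (C S : ℝ → ℝ → ℝ) (hC : IsCopula C) (hS : IsCopula S)
    (hsym : ∀ u ∈ Set.Icc (0:ℝ) 1, ∀ v ∈ Set.Icc (0:ℝ) 1, S u v = S v u)
    (β γ : ℝ) (hβ : 0 ≤ β) (hγ : 0 ≤ γ) (hβγ : β + γ ≤ 1)
    (E : ℝ → ℝ → ℝ)
    (hE : ∀ u v : ℝ, E u v = β * C u v + γ * C v u + (1 - β - γ) * S u v) :
    IsCopula E ∧
    ∀ p : ℝ, 1 ≤ p →
      (∫ x in unitSq, |E x.1 x.2 - E x.2 x.1| ^ p) ^ (1/p) =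
        |β - γ| * (∫ x in unitSq, |C x.1 x.2 - C x.2 x.1| ^ p) ^ (1/p) := by
  obtain ⟨hC1, hC2, hC3, hC4, hC5⟩ := hC
  obtain ⟨hS1, hS2, hS3, hS4, hS5⟩ := hS
  have h01 : (0:ℝ) ∈ Set.Icc (0:ℝ) 1 := by norm_num
  have h11 : (1:ℝ) ∈ Set.Icc (0:ℝ) 1 := by norm_num
  have hδ : 0 ≤ 1 - β - γ := by linarith
  constructor
  · refine ⟨?_, ?_, ?_, ?_, ?_⟩
    · intro u hu
      rw [hE, hC1 u hu, hC2 u hu, hS1 u hu]; ring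
    · intro v hv
      rw [hE, hC2 v hv, hC1 v hv, hS2 v hv]; ring
    · intro u hu
      rw [hE, hC3 u hu, hC4 u hu, hS3 u hu]; ring
    · intro v hv
      rw [hE, hC4 v hv, hC3 v hv, hS4 v hv]; ring
    · intro u₁ u₂ v₁ v₂ h1 h2 h3 h4 h5 h6
      have a1 := hC5 u₁ u₂ v₁ v₂ h1 h2 h3 h4 h5 h6
      have a2 := hC5 v₁ v₂ u₁ u₂ h4 h5 h6 h1 h2 h3
      have a3 := hS5 u₁ u₂ v₁ v₂ h1 h2 h3 h4 h5 h6
      simp only [hE]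
      nlinarith [mul_nonneg hβ a1, mul_nonneg hγ a2, mul_nonneg hδ a3]
  · intro p hp
    have hp0 : p ≠ 0 := by linarith
    have hmeas : MeasurableSet unitSq :=
      (measurableSet_Icc.prod measurableSet_Icc)
    have key : ∀ x ∈ unitSq, |E x.1 x.2 - E x.2 x.1| ^ p
        = |β - γ| ^ p * |C x.1 x.2 - C x.2 x.1| ^ p := by
      rintro ⟨u, v⟩ ⟨hu, hv⟩
      have hs := hsym u hu v hv
      have : E u v - E v u = (β - γ) * (C u v - C v u) := by
        rw [hE, hE, hs]; ring
      simp only [this, abs_mul]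
      rw [← Real.mul_rpow (abs_nonneg _) (abs_nonneg _)]
    rw [setIntegral_congr_fun hmeas key, integral_const_mul,
      Real.mul_rpow (Real.rpow_nonneg (abs_nonneg _) _)
        (setIntegral_nonneg hmeas (fun x _ => Real.rpow_nonneg (abs_nonneg _) _))]
    rw [← Real.rpow_mul (abs_nonneg _), mul_one_div, div_self hp0, Real.rpow_one]
end
end

section
/- Let p ∈ [1, ∞) be real, let (C_n) be a sequence of bivariate copulas converging uniformly on [0,1]² to a bivariate copula C, and suppose C is not symmetric (C(u₀,v₀) ≠ C(v₀,u₀) for some (u₀,v₀) ∈ [0,1]²). Then ∫_{[0,1]²} |C_n(u,v) − C_n(v,u)|^p du dv → ∫_{[0,1]²} |C(u,v) − C(v,u)|^p du dv as n → ∞, and the limit is strictly positive; consequently, for any real sequence (c_n) with c_n/n → 0, the statistic T_n := n · ∫_{[0,1]²} |C_n(u,v) − C_n(v,u)|^p du dv satisfies T_n > c_n for all sufficiently large n. -/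
/-!
A copula takes values in `[0, 1]` and is 1-Lipschitz in each variable, so the asymmetry integrand
`|C(u,v) - C(v,u)|^p` is continuous on the square and bounded by `1`; uniform convergence gives
pointwise convergence, and dominated convergence gives convergence `I_n → I` of the integrals.
The boundary conditions make every copula symmetric on the boundary of the square, so a point of
asymmetry is interior, and by continuity the integrand is positive on an open set, making `I`
positive. Finally `n · I_n > n · I / 2 > c_n` for large `n` since `c_n = o(n)`.
-/

open MeasureTheory Set Filter

noncomputable section

-- `0 ≤ B` is needed because in `ℝ` the supremum over an empty index set is `0`.
theorem le_biSup_biSup_of_forall_le {α β : Type*} {f : α → β → ℝ} {s : Set α} {t : Set β}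
    {B : ℝ} (hB : ∀ u ∈ s, ∀ v ∈ t, f u v ≤ B) (hB₀ : 0 ≤ B) {u : α} (hu : u ∈ s) {v : β}
    (hv : v ∈ t) : f u v ≤ ⨆ u ∈ s, ⨆ v ∈ t, f u v := by
  have hinner : ∀ u ∈ s, ⨆ v ∈ t, f u v ≤ B := fun u hu =>
    Real.iSup_le (fun v => Real.iSup_le (hB u hu v) hB₀) hB₀
  calc f u v ≤ ⨆ v ∈ t, f u v :=
        le_ciSup_of_le ⟨B, by rintro _ ⟨v, rfl⟩; exact Real.iSup_le (hB u hu v) hB₀⟩ v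
          (by rw [ciSup_pos hv])
    _ ≤ ⨆ u ∈ s, ⨆ v ∈ t, f u v :=
        le_ciSup_of_le ⟨B, by rintro _ ⟨u, rfl⟩; exact Real.iSup_le (hinner u) hB₀⟩ u
          (by rw [ciSup_pos hu])

theorem tendsto_apply_of_tendsto_biSup_abs_sub {ι α β : Type*} {l : Filter ι}
    {F : ι → α → β → ℝ} {f : α → β → ℝ} {s : Set α} {t : Set β} {B : ℝ}
    (hB : ∀ i, ∀ u ∈ s, ∀ v ∈ t, |F i u v - f u v| ≤ B)
    (hF : Tendsto (fun i => ⨆ u ∈ s, ⨆ v ∈ t, |F i u v - f u v|) l (nhds 0))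
    {u : α} (hu : u ∈ s) {v : β} (hv : v ∈ t) :
    Tendsto (fun i => F i u v) l (nhds (f u v)) := by
  rw [tendsto_iff_norm_sub_tendsto_zero]
  exact squeeze_zero (fun _ => norm_nonneg _) (fun i =>
    le_biSup_biSup_of_forall_le (hB i) ((abs_nonneg _).trans (hB i u hu v hv)) hu hv) hF

theorem setIntegral_pos_of_continuousOn {X : Type*} [TopologicalSpace X] [MeasurableSpace X]
    {μ : Measure X} [μ.IsOpenPosMeasure] {s : Set X} {f : X → ℝ} (hs : MeasurableSet s)
    (hf : ContinuousOn f s) (hfi : IntegrableOn f s μ) (hf₀ : ∀ x ∈ s, 0 ≤ f x) {x₀ : X}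
    (hx₀ : x₀ ∈ interior s) (hfx₀ : 0 < f x₀) : 0 < ∫ x in s, f x ∂μ := by
  rw [setIntegral_pos_iff_support_of_nonneg_ae (ae_restrict_of_forall_mem hs hf₀) hfi]
  have hopen : IsOpen (interior s ∩ f ⁻¹' Ioi 0) :=
    (hf.mono interior_subset).isOpen_inter_preimage isOpen_interior isOpen_Ioi
  refine (hopen.measure_pos μ ⟨x₀, hx₀, hfx₀⟩).trans_le (measure_mono ?_)
  rintro x ⟨hxs, hfx⟩
  exact ⟨hfx.ne', interior_subset hxs⟩

theorem eventually_lt_natCast_mul_of_tendsto {c a : ℕ → ℝ} {L : ℝ} (hL : 0 < L)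
    (hc : Tendsto (fun n => c n / (n : ℝ)) atTop (nhds 0)) (ha : Tendsto a atTop (nhds L)) :
    ∀ᶠ n in atTop, c n < (n : ℝ) * a n := by
  filter_upwards [hc.eventually (eventually_lt_nhds (half_pos hL)),
    ha.eventually (eventually_gt_nhds (half_lt_self hL)), eventually_gt_atTop 0]
    with n hcn han hn
  have hn : (0 : ℝ) < n := Nat.cast_pos.mpr hn
  rw [div_lt_iff₀ hn] at hcn
  nlinarith

namespace IsCopula

variable {C : ℝ → ℝ → ℝ}

theorem swap (hC : IsCopula C) : IsCopula (fun u v => C v u) := by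
  obtain ⟨h0, h0', h1, h1', h2⟩ := hC
  exact ⟨h0', h0, h1', h1, fun u₁ u₂ v₁ v₂ hu₁ hu hu₂ hv₁ hv hv₂ => by
    linarith [h2 v₁ v₂ u₁ u₂ hv₁ hv hv₂ hu₁ hu hu₂]⟩

theorem nonneg (hC : IsCopula C) {u v : ℝ} (hu : u ∈ Icc (0:ℝ) 1) (hv : v ∈ Icc (0:ℝ) 1) :
    0 ≤ C u v := by
  obtain ⟨h0, h0', -, -, h2⟩ := hC
  linarith [h2 0 u 0 v le_rfl hu.1 hu.2 le_rfl hv.1 hv.2, h0' v hv, h0 u hu,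
    h0 0 (left_mem_Icc.mpr zero_le_one)]

theorem le_one (hC : IsCopula C) {u v : ℝ} (hu : u ∈ Icc (0:ℝ) 1) (hv : v ∈ Icc (0:ℝ) 1) :
    C u v ≤ 1 := by
  obtain ⟨-, h0', h1, -, h2⟩ := hC
  linarith [h2 0 u v 1 le_rfl hu.1 hu.2 hv.1 hv.2 le_rfl, h1 u hu,
    h0' 1 (right_mem_Icc.mpr zero_le_one), h0' v hv, hu.2]

theorem abs_apply_sub_le_one (hC : IsCopula C) {D : ℝ → ℝ → ℝ} (hD : IsCopula D)
    {u v u' v' : ℝ}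
    (hu : u ∈ Icc (0:ℝ) 1) (hv : v ∈ Icc (0:ℝ) 1) (hu' : u' ∈ Icc (0:ℝ) 1)
    (hv' : v' ∈ Icc (0:ℝ) 1) : |C u v - D u' v'| ≤ 1 :=
  (abs_sub_le_of_le_of_le (hC.nonneg hu hv) (hC.le_one hu hv) (hD.nonneg hu' hv')
    (hD.le_one hu' hv')).trans_eq (sub_zero 1)

/-- The 2-increasing property on the rectangles `[u', u] × [0, v]` and `[u', u] × [v, 1]`. -/
theorem abs_sub_le_of_fst (hC : IsCopula C) {u u' v : ℝ} (hu : u ∈ Icc (0:ℝ) 1)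
    (hu' : u' ∈ Icc (0:ℝ) 1) (hv : v ∈ Icc (0:ℝ) 1) : |C u v - C u' v| ≤ |u - u'| := by
  obtain ⟨h0, -, h1, -, h2⟩ := hC
  wlog h : u' ≤ u generalizing u u'
  · rw [abs_sub_comm, abs_sub_comm u]
    exact this hu' hu (le_of_not_ge h)
  rw [abs_of_nonneg (sub_nonneg.mpr h), abs_le]
  constructor
  · linarith [h2 u' u 0 v hu'.1 h hu.2 le_rfl hv.1 hv.2, h0 u hu, h0 u' hu']
  · linarith [h2 u' u v 1 hu'.1 h hu.2 hv.1 hv.2 le_rfl, h1 u hu, h1 u' hu']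

theorem abs_apply_sub_apply_le (hC : IsCopula C) {x y : ℝ × ℝ} (hx : x ∈ unitSq)
    (hy : y ∈ unitSq) :
    |C x.1 x.2 - C y.1 y.2| ≤ |x.1 - y.1| + |x.2 - y.2| :=
  calc |C x.1 x.2 - C y.1 y.2| ≤ |C x.1 x.2 - C y.1 x.2| + |C y.1 x.2 - C y.1 y.2| :=
        abs_sub_le _ _ _
    _ ≤ |x.1 - y.1| + |x.2 - y.2| :=
        add_le_add (hC.abs_sub_le_of_fst hx.1 hy.1 hx.2)
          (hC.swap.abs_sub_le_of_fst hx.2 hy.2 hy.1)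

theorem continuousOn (hC : IsCopula C) : ContinuousOn (fun x : ℝ × ℝ => C x.1 x.2) unitSq := by
  refine (LipschitzOnWith.of_dist_le_mul (K := 2) fun x hx y hy => ?_).continuousOn
  rw [Real.dist_eq, NNReal.coe_ofNat, Prod.dist_eq, Real.dist_eq, Real.dist_eq]
  linarith [hC.abs_apply_sub_apply_le hx hy, le_max_left |x.1 - y.1| |x.2 - y.2|,
    le_max_right |x.1 - y.1| |x.2 - y.2|]

theorem continuousOn_abs_sub_swap_rpow (hC : IsCopula C) {p : ℝ} (hp : 0 ≤ p) :
    ContinuousOn (fun x : ℝ × ℝ => |C x.1 x.2 - C x.2 x.1| ^ p) unitSq :=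
  ((hC.continuousOn.sub (hC.swap.continuousOn)).abs).rpow_const fun _ _ => Or.inr hp

theorem mem_Ioo_of_apply_ne_apply_swap (hC : IsCopula C) {u v : ℝ} (hu : u ∈ Icc (0:ℝ) 1)
    (hv : v ∈ Icc (0:ℝ) 1) (hne : C u v ≠ C v u) : u ∈ Ioo (0:ℝ) 1 := by
  obtain ⟨h0, h0', h1, h1', -⟩ := hC
  refine ⟨hu.1.lt_of_ne ?_, hu.2.lt_of_ne ?_⟩ <;> rintro rfl <;> apply hne
  · rw [h0' v hv, h0 v hv]
  · rw [h1' v hv, h1 v hv]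

theorem setIntegral_abs_sub_swap_rpow_pos (hC : IsCopula C) {p : ℝ} (hp : 0 ≤ p)
    (hasym : ∃ u₀ ∈ Icc (0:ℝ) 1, ∃ v₀ ∈ Icc (0:ℝ) 1, C u₀ v₀ ≠ C v₀ u₀) :
    0 < ∫ x in unitSq, |C x.1 x.2 - C x.2 x.1| ^ p := by
  obtain ⟨u₀, hu₀, v₀, hv₀, hne⟩ := hasym
  have hx₀ : (u₀, v₀) ∈ interior unitSq := by
    rw [unitSq, interior_prod_eq, interior_Icc]
    exact ⟨hC.mem_Ioo_of_apply_ne_apply_swap hu₀ hv₀ hne,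
      hC.swap.mem_Ioo_of_apply_ne_apply_swap hv₀ hu₀ hne⟩
  have hcont := hC.continuousOn_abs_sub_swap_rpow hp
  exact setIntegral_pos_of_continuousOn (measurableSet_Icc.prod measurableSet_Icc) hcont
    (hcont.integrableOn_compact (isCompact_Icc.prod isCompact_Icc))
    (fun _ _ => Real.rpow_nonneg (abs_nonneg _) p) hx₀
    (Real.rpow_pos_of_pos (abs_pos.mpr (sub_ne_zero.mpr hne)) p)

end IsCopula

theorem tendsto_setIntegral_abs_sub_swap_rpow {ι : Type*} {l : Filter ι} [l.IsCountablyGenerated]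
    {Cn : ι → ℝ → ℝ → ℝ} {C : ℝ → ℝ → ℝ} (hCn : ∀ i, IsCopula (Cn i)) {p : ℝ} (hp : 0 ≤ p)
    (hlim : ∀ u ∈ Icc (0:ℝ) 1, ∀ v ∈ Icc (0:ℝ) 1, Tendsto (fun i => Cn i u v) l (nhds (C u v))) :
    Tendsto (fun i => ∫ x in unitSq, |Cn i x.1 x.2 - Cn i x.2 x.1| ^ p) l
      (nhds (∫ x in unitSq, |C x.1 x.2 - C x.2 x.1| ^ p)) := by
  have hsq : MeasurableSet unitSq := measurableSet_Icc.prod measurableSet_Icc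
  refine tendsto_integral_filter_of_dominated_convergence (fun _ => (1:ℝ))
    (Eventually.of_forall fun i =>
      ((hCn i).continuousOn_abs_sub_swap_rpow hp).aestronglyMeasurable hsq)
    (Eventually.of_forall fun i => ae_restrict_of_forall_mem hsq fun x hx => ?_)
    (integrableOn_const (isCompact_Icc.prod isCompact_Icc).measure_lt_top.ne)
    (ae_restrict_of_forall_mem hsq fun x hx => ?_)
  · rw [Real.norm_eq_abs, abs_of_nonneg (Real.rpow_nonneg (abs_nonneg _) p)]
    exact Real.rpow_le_one (abs_nonneg _)
      ((hCn i).abs_apply_sub_le_one (hCn i) hx.1 hx.2 hx.2 hx.1) hp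
  · exact (((hlim _ hx.1 _ hx.2).sub (hlim _ hx.2 _ hx.1)).abs).rpow_const (Or.inr hp)

theorem stmt19 (p : ℝ) (hp : 1 ≤ p) (Cn : ℕ → ℝ → ℝ → ℝ) (C : ℝ → ℝ → ℝ)
    (hCn : ∀ n, IsCopula (Cn n)) (hC : IsCopula C)
    (hconv : Filter.Tendsto
      (fun n => ⨆ u ∈ Set.Icc (0:ℝ) 1, ⨆ v ∈ Set.Icc (0:ℝ) 1, |Cn n u v - C u v|)
      Filter.atTop (nhds 0))
    (hasym : ∃ u₀ ∈ Set.Icc (0:ℝ) 1, ∃ v₀ ∈ Set.Icc (0:ℝ) 1, C u₀ v₀ ≠ C v₀ u₀) :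
    Filter.Tendsto (fun n => ∫ x in unitSq, |Cn n x.1 x.2 - Cn n x.2 x.1| ^ p)
      Filter.atTop (nhds (∫ x in unitSq, |C x.1 x.2 - C x.2 x.1| ^ p)) ∧
    (0 < ∫ x in unitSq, |C x.1 x.2 - C x.2 x.1| ^ p) ∧
    ∀ c : ℕ → ℝ, Filter.Tendsto (fun n => c n / (n : ℝ)) Filter.atTop (nhds 0) →
      ∀ᶠ n in Filter.atTop,
        c n < (n : ℝ) * ∫ x in unitSq, |Cn n x.1 x.2 - Cn n x.2 x.1| ^ p := by
  have hp₀ : 0 ≤ p := zero_le_one.trans hp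
  have hbound : ∀ n, ∀ u ∈ Icc (0:ℝ) 1, ∀ v ∈ Icc (0:ℝ) 1, |Cn n u v - C u v| ≤ 1 :=
    fun n _ hu _ hv => (hCn n).abs_apply_sub_le_one hC hu hv hu hv
  have hlim := tendsto_setIntegral_abs_sub_swap_rpow hCn hp₀
    fun u hu v hv => tendsto_apply_of_tendsto_biSup_abs_sub hbound hconv hu hv
  have hpos := hC.setIntegral_abs_sub_swap_rpow_pos hp₀ hasym
  exact ⟨hlim, hpos, fun c hc => eventually_lt_natCast_mul_of_tendsto hpos hc hlim⟩
end
end
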